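/- For every A > 0 there exists ε₀ > 0 such that for all ε ∈ (0, ε₀] the map (x, y) ↦ (F^ε(x,y), G(x,y)) is injective on the strip [−Aε, Aε] × ℝⁿ. -/

import Mathlib

/-- `B^ε(y) = (1 − εβ(y))/(1 + εβ(y))`. -/
noncomputable def Beps {n : ℕ} (β : EuclideanSpace ℝ (Fin n) → ℝ) (ε : ℝ)
    (y : EuclideanSpace ℝ (Fin n)) : ℝ :=
  (1 - ε * β y) / (1 + ε * β y)

/-- `F^ε(x,y) = x + x⁺·(B^ε(y) − 1)`. -/
noncomputable def Feps {n : ℕ} (β : EuclideanSpace ℝ (Fin n) → ℝ) (ε : ℝ)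
    (x : ℝ) (y : EuclideanSpace ℝ (Fin n)) : ℝ :=
  x + max x 0 * (Beps β ε y - 1)

/-- `G(x,y) = y − x·θ(y)`. -/
noncomputable def Gfun {n : ℕ}
    (θ : EuclideanSpace ℝ (Fin n) → EuclideanSpace ℝ (Fin n))
    (x : ℝ) (y : EuclideanSpace ℝ (Fin n)) : EuclideanSpace ℝ (Fin n) :=
  y - x • θ y

/-!
On the strip `|x| ≤ Aε` the map `y ↦ y - xθ(y)` is a Lipschitz-small perturbation of the
identity, so `G(x₁,y₁) = G(x₂,y₂)` forces `‖y₁ - y₂‖ ≤ 2‖θ‖∞ |x₁ - x₂|`. The map `F^ε` preserves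
the sign of `x`, is the identity for `x ≤ 0` and equals `x B^ε(y)` for `x ≥ 0`, where `|1 - B^ε|`
and the Lipschitz constant of `B^ε` are `O(ε)`. The identity
`x₁ - x₂ = (x₁ - x₂)(1 - B^ε(y₁)) + x₂ (B^ε(y₂) - B^ε(y₁))` then gives
`|x₁ - x₂| ≤ O(ε) |x₁ - x₂|`, so `x₁ = x₂`, and hence `y₁ = y₂`.
-/

open Set NNReal

lemma one_sub_div_one_add_pos {t : ℝ} (ht : |t| < 1) : 0 < (1 - t) / (1 + t) := by
  obtain ⟨h₁, h₂⟩ := abs_lt.mp ht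
  exact div_pos (by linarith) (by linarith)

lemma abs_one_sub_div_one_add_sub_le {s t : ℝ} (hs : |s| ≤ 1 / 2) (ht : |t| ≤ 1 / 2) :
    |(1 - s) / (1 + s) - (1 - t) / (1 + t)| ≤ 8 * |s - t| := by
  have hs' : 1 / 2 ≤ 1 + s := by linarith [(abs_le.mp hs).1]
  have ht' : 1 / 2 ≤ 1 + t := by linarith [(abs_le.mp ht).1]
  have hnum : (1 - s) * (1 + t) - (1 + s) * (1 - t) = 2 * (t - s) := by ring
  rw [div_sub_div _ _ (by positivity) (by positivity), hnum, abs_div, abs_mul, abs_mul, abs_two,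
    abs_of_pos (by positivity : 0 < 1 + s), abs_of_pos (by positivity : 0 < 1 + t),
    abs_sub_comm t s, div_le_iff₀ (by positivity)]
  have hprod : 1 / 4 ≤ (1 + s) * (1 + t) := by nlinarith
  nlinarith [mul_le_mul_of_nonneg_left hprod (abs_nonneg (s - t))]

lemma eq_of_mul_eq_mul_of_abs_le {x₁ x₂ b₁ b₂ δ κ : ℝ} (h : x₁ * b₁ = x₂ * b₂)
    (hb₁ : |1 - b₁| ≤ δ) (hb : |x₂ * (b₂ - b₁)| ≤ κ * |x₁ - x₂|) (hδκ : δ + κ < 1) :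
    x₁ = x₂ := by
  have hd : |x₁ - x₂| ≤ (δ + κ) * |x₁ - x₂| :=
    calc |x₁ - x₂| = |(x₁ - x₂) * (1 - b₁) + x₂ * (b₂ - b₁)| := by
          congr 1; linear_combination h
      _ ≤ |(x₁ - x₂) * (1 - b₁)| + |x₂ * (b₂ - b₁)| := abs_add_le _ _
      _ ≤ |x₁ - x₂| * δ + κ * |x₁ - x₂| := by rw [abs_mul]; gcongr
      _ = (δ + κ) * |x₁ - x₂| := by ring
  have hzero : |x₁ - x₂| = 0 := by nlinarith [abs_nonneg (x₁ - x₂)]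
  exact sub_eq_zero.mp (abs_eq_zero.mp hzero)

lemma norm_sub_le_of_sub_smul_eq_sub_smul {E : Type*} [NormedAddCommGroup E]
    [NormedSpace ℝ E] {θ : E → E} {T : ℝ} {L : ℝ≥0} {x₁ x₂ : ℝ} {y₁ y₂ : E}
    (hT : ∀ y, ‖θ y‖ ≤ T) (hL : LipschitzWith L θ) (hx₂ : |x₂| * L ≤ 1 / 2)
    (h : y₁ - x₁ • θ y₁ = y₂ - x₂ • θ y₂) : ‖y₁ - y₂‖ ≤ 2 * T * |x₁ - x₂| := by
  have hy : y₁ - y₂ = (x₁ - x₂) • θ y₁ + x₂ • (θ y₁ - θ y₂) := by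
    rw [sub_eq_sub_iff_sub_eq_sub.mp h]; module
  have hbound : ‖y₁ - y₂‖ ≤ |x₁ - x₂| * T + |x₂| * (L * ‖y₁ - y₂‖) :=
    calc ‖y₁ - y₂‖ ≤ ‖(x₁ - x₂) • θ y₁‖ + ‖x₂ • (θ y₁ - θ y₂)‖ := hy ▸ norm_add_le _ _
      _ = |x₁ - x₂| * ‖θ y₁‖ + |x₂| * ‖θ y₁ - θ y₂‖ := by
          rw [norm_smul, norm_smul, Real.norm_eq_abs, Real.norm_eq_abs]
      _ ≤ |x₁ - x₂| * T + |x₂| * (L * ‖y₁ - y₂‖) := by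
          gcongr
          · exact hT _
          · simpa only [dist_eq_norm] using hL.dist_le_mul y₁ y₂
  nlinarith [mul_le_mul_of_nonneg_right hx₂ (norm_nonneg (y₁ - y₂))]

lemma exists_lipschitzWith_of_bddAbove_norm_fderiv {E F : Type*} [NormedAddCommGroup E]
    [NormedSpace ℝ E] [NormedAddCommGroup F] [NormedSpace ℝ F] {f : E → F}
    (hf : Differentiable ℝ f) (h : BddAbove (range fun x => ‖fderiv ℝ f x‖)) :
    ∃ K, LipschitzWith K f := by
  obtain ⟨C, hC⟩ := h
  refine ⟨C.toNNReal, lipschitzWith_of_nnnorm_fderiv_le hf fun x => ?_⟩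
  rw [← NNReal.coe_le_coe, coe_nnnorm]
  exact (hC ⟨x, rfl⟩).trans (Real.le_coe_toNNReal C)

section Strip

variable {n : ℕ} {β : EuclideanSpace ℝ (Fin n) → ℝ} {ε : ℝ}

lemma Beps_pos {y : EuclideanSpace ℝ (Fin n)} (h : |ε * β y| < 1) : 0 < Beps β ε y :=
  one_sub_div_one_add_pos h

lemma abs_one_sub_Beps_le {y : EuclideanSpace ℝ (Fin n)} (h : |ε * β y| ≤ 1 / 2) :
    |1 - Beps β ε y| ≤ 8 * |ε * β y| := by
  have h₀ := abs_one_sub_div_one_add_sub_le (s := 0) (by norm_num) h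
  rwa [sub_zero, add_zero, div_one, zero_sub, abs_neg] at h₀

lemma abs_Beps_sub_Beps_le {y₁ y₂ : EuclideanSpace ℝ (Fin n)} (h₁ : |ε * β y₁| ≤ 1 / 2)
    (h₂ : |ε * β y₂| ≤ 1 / 2) :
    |Beps β ε y₁ - Beps β ε y₂| ≤ 8 * |ε * β y₁ - ε * β y₂| :=
  abs_one_sub_div_one_add_sub_le h₁ h₂

lemma Feps_of_nonpos {x : ℝ} (y : EuclideanSpace ℝ (Fin n)) (hx : x ≤ 0) :
    Feps β ε x y = x := by
  rw [Feps, max_eq_right hx, zero_mul, add_zero]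

lemma Feps_of_nonneg {x : ℝ} (y : EuclideanSpace ℝ (Fin n)) (hx : 0 ≤ x) :
    Feps β ε x y = x * Beps β ε y := by
  rw [Feps, max_eq_left hx]; ring

lemma eq_of_Feps_eq_Feps {x₁ x₂ δ κ : ℝ} {y₁ y₂ : EuclideanSpace ℝ (Fin n)}
    (hB : ∀ y, 0 < Beps β ε y) (hB₁ : |1 - Beps β ε y₁| ≤ δ)
    (hB₁₂ : |x₂ * (Beps β ε y₂ - Beps β ε y₁)| ≤ κ * |x₁ - x₂|) (hδκ : δ + κ < 1)
    (h : Feps β ε x₁ y₁ = Feps β ε x₂ y₂) : x₁ = x₂ := by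
  rcases le_or_gt x₁ 0 with hx₁ | hx₁ <;> rcases le_or_gt x₂ 0 with hx₂ | hx₂
  · rwa [Feps_of_nonpos y₁ hx₁, Feps_of_nonpos y₂ hx₂] at h
  · rw [Feps_of_nonpos y₁ hx₁, Feps_of_nonneg y₂ hx₂.le] at h
    nlinarith [mul_pos hx₂ (hB y₂)]
  · rw [Feps_of_nonneg y₁ hx₁.le, Feps_of_nonpos y₂ hx₂] at h
    nlinarith [mul_pos hx₁ (hB y₁)]
  · rw [Feps_of_nonneg y₁ hx₁.le, Feps_of_nonneg y₂ hx₂.le] at h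
    exact eq_of_mul_eq_mul_of_abs_le h hB₁ hB₁₂ hδκ

theorem injOn_Feps_Gfun {θ : EuclideanSpace ℝ (Fin n) → EuclideanSpace ℝ (Fin n)}
    {M T r : ℝ} {Kβ L : ℝ≥0} (hε : 0 ≤ ε) (hM : ∀ y, |β y| ≤ M) (hβ : LipschitzWith Kβ β)
    (hT : ∀ y, ‖θ y‖ ≤ T) (hθ : LipschitzWith L θ) (hεM : ε * M ≤ 1 / 2)
    (hrL : r * L ≤ 1 / 2) (hcontr : 8 * ε * M + 16 * r * ε * Kβ * T < 1) :
    InjOn (fun p : ℝ × EuclideanSpace ℝ (Fin n) => (Feps β ε p.1 p.2, Gfun θ p.1 p.2))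
      (Icc (-r) r ×ˢ univ) := by
  have hεβ_le : ∀ y, |ε * β y| ≤ ε * M := fun y => by
    rw [abs_mul, abs_of_nonneg hε]; exact mul_le_mul_of_nonneg_left (hM y) hε
  have hεβ : ∀ y, |ε * β y| ≤ 1 / 2 := fun y => (hεβ_le y).trans hεM
  rintro ⟨x₁, y₁⟩ - ⟨x₂, y₂⟩ ⟨hx₂, -⟩ h
  obtain ⟨hF, hG⟩ := Prod.mk.inj h
  have hx₂r : |x₂| ≤ r := abs_le.mpr hx₂
  have hr : 0 ≤ r := (abs_nonneg x₂).trans hx₂r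
  have hy : ‖y₁ - y₂‖ ≤ 2 * T * |x₁ - x₂| :=
    norm_sub_le_of_sub_smul_eq_sub_smul hT hθ
      ((mul_le_mul_of_nonneg_right hx₂r L.coe_nonneg).trans hrL) hG
  have hB₁₂ : |x₂ * (Beps β ε y₂ - Beps β ε y₁)| ≤ 16 * r * ε * Kβ * T * |x₁ - x₂| :=
    calc |x₂ * (Beps β ε y₂ - Beps β ε y₁)|
        ≤ r * (8 * |ε * β y₂ - ε * β y₁|) := by
          rw [abs_mul]; gcongr
          exact abs_Beps_sub_Beps_le (hεβ y₂) (hεβ y₁)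
      _ = 8 * r * ε * dist (β y₂) (β y₁) := by
          rw [← mul_sub, abs_mul, abs_of_nonneg hε, Real.dist_eq]; ring
      _ ≤ 8 * r * ε * (Kβ * ‖y₁ - y₂‖) := by
          rw [← dist_eq_norm, dist_comm y₁]
          gcongr
          exact hβ.dist_le_mul y₂ y₁
      _ ≤ 8 * r * ε * (Kβ * (2 * T * |x₁ - x₂|)) := by
          gcongr
      _ = 16 * r * ε * Kβ * T * |x₁ - x₂| := by ring
  have hx : x₁ = x₂ :=
    eq_of_Feps_eq_Feps (fun y => Beps_pos ((hεβ y).trans_lt (by norm_num)))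
      ((abs_one_sub_Beps_le (hεβ y₁)).trans (by linarith [hεβ_le y₁])) hB₁₂ hcontr hF
  subst hx
  simpa [sub_eq_zero] using hy

end Strip

theorem stmt_9_general (n : ℕ)
    (β : EuclideanSpace ℝ (Fin n) → ℝ)
    (hβ : ContDiff ℝ 1 β)
    (hβbd : BddAbove (Set.range fun y => |β y|))
    (hβ'bd : BddAbove (Set.range fun y => ‖fderiv ℝ β y‖))
    (θ : EuclideanSpace ℝ (Fin n) → EuclideanSpace ℝ (Fin n))
    (hθ : ContDiff ℝ 1 θ)
    (hθbd : BddAbove (Set.range fun y => ‖θ y‖))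
    (hθ'bd : BddAbove (Set.range fun y => ‖fderiv ℝ θ y‖)) :
    ∀ A > 0, ∃ ε₀ > 0, ∀ ε : ℝ, 0 < ε → ε ≤ ε₀ →
      Set.InjOn
        (fun p : ℝ × EuclideanSpace ℝ (Fin n) => (Feps β ε p.1 p.2, Gfun θ p.1 p.2))
        (Set.Icc (-(A * ε)) (A * ε) ×ˢ (Set.univ : Set (EuclideanSpace ℝ (Fin n)))) := by
  intro A hA
  obtain ⟨M, hM⟩ := hβbd
  obtain ⟨T, hT⟩ := hθbd
  obtain ⟨Kβ, hKβ⟩ :=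
    exists_lipschitzWith_of_bddAbove_norm_fderiv (hβ.differentiable one_ne_zero) hβ'bd
  obtain ⟨L, hL⟩ :=
    exists_lipschitzWith_of_bddAbove_norm_fderiv (hθ.differentiable one_ne_zero) hθ'bd
  have hM₀ : 0 ≤ M := (abs_nonneg _).trans (hM ⟨0, rfl⟩)
  have hT₀ : 0 ≤ T := (norm_nonneg _).trans (hT ⟨0, rfl⟩)
  have hAL : 0 ≤ A * L := by positivity
  have hAKT : 0 ≤ A * Kβ * T := by positivity
  set D := 1 + 16 * M + 2 * A * L + 32 * A * Kβ * T
  refine ⟨1 / D, by positivity, fun ε hε hεD => ?_⟩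
  have hεD : ε * D ≤ 1 := (le_div_iff₀ (by positivity)).mp hεD
  have hε₁ : ε ≤ 1 := by nlinarith
  refine injOn_Feps_Gfun hε.le (fun y => hM ⟨y, rfl⟩) hKβ (fun y => hT ⟨y, rfl⟩) hL
    ?_ ?_ ?_
  · nlinarith
  · nlinarith
  · nlinarith [mul_le_mul_of_nonneg_left hε₁ (mul_nonneg hε.le hAKT)]

theorem stmt_9 (n : ℕ) (hn : 1 ≤ n)
    (β : EuclideanSpace ℝ (Fin n) → ℝ)
    (hβ : ContDiff ℝ 1 β)
    (hβbd : BddAbove (Set.range fun y => |β y|))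
    (hβ'bd : BddAbove (Set.range fun y => ‖fderiv ℝ β y‖))
    (θ : EuclideanSpace ℝ (Fin n) → EuclideanSpace ℝ (Fin n))
    (hθ : ContDiff ℝ 1 θ)
    (hθbd : BddAbove (Set.range fun y => ‖θ y‖))
    (hθ'bd : BddAbove (Set.range fun y => ‖fderiv ℝ θ y‖)) :
    ∀ A > 0, ∃ ε₀ > 0, ∀ ε : ℝ, 0 < ε → ε ≤ ε₀ →
      Set.InjOn
        (fun p : ℝ × EuclideanSpace ℝ (Fin n) => (Feps β ε p.1 p.2, Gfun θ p.1 p.2))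
        (Set.Icc (-(A * ε)) (A * ε) ×ˢ (Set.univ : Set (EuclideanSpace ℝ (Fin n)))) :=
  stmt_9_general n β hβ hβbd hβ'bd θ hθ hθbd hθ'bd
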